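/- arXiv:math/9904106 — 5 statements merged into one kernel-verified Lean document; each statement's English description precedes it below -/
import Mathlib

section
/- Let G and K be groups and n ≥ 1 a natural number. Suppose f, g : G → K are group homomorphisms such that f(x)·g(x)⁻¹ ∈ K_n for every x ∈ G. Then f(w)·g(w)⁻¹ ∈ K_{n+1} for every w in the commutator subgroup [G,G]. In particular, if K = G = F is a free group of finite rank and f, g are two endomorphisms of F lifting the same automorphism of F/F_n, then for any fixed element ω ∈ [F,F] one has f(ω) ∈ ω·F_{n+1} if and only if g(ω) ∈ ω·F_{n+1}. -/
/-!
Modulo `K_{n+1}` every element of `K_n` is central, so in `K ⧸ K_{n+1}` the images of `f` and `g`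
differ by central factors. These cancel in commutators, so `f` and `g` agree modulo `K_{n+1}` on
every commutator, hence on the subgroup `[G,G]` they generate. For the lifts `f'`, `g'` this says
that `f'(ω)` and `g'(ω)` have the same image in `F/F_{n+1}`.

The paper's `G_k` is `(⊤ : Subgroup G).lowerCentralSeries (k - 1)` in Mathlib's indexing.
-/

open scoped commutatorElement
open Subgroup

section

variable {G K : Type*} [Group G] [Group K]

theorem commutatorElement_mul_mul_of_mem_center {a b c d : K} (hc : c ∈ center K)
    (hd : d ∈ center K) : ⁅c * a, d * b⁆ = ⁅a, b⁆ := by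
  have hc' : ∀ x, Commute c x := fun x => (mem_center_iff.mp hc x).symm
  have hd' : ∀ x, Commute d x := fun x => (mem_center_iff.mp hd x).symm
  rw [commutatorElement_mul_left_eq_conj_mul, (hc' _).commutator_eq, mul_one,
    (hc' _).mul_inv_cancel, commutatorElement_mul_right_eq_mul_conj, (hd' a).symm.commutator_eq,
    one_mul, (hd' _).mul_inv_cancel]

theorem commutator_le_eqLocus_of_mul_inv_mem_center {f g : G →* K}
    (h : ∀ x, f x * (g x)⁻¹ ∈ center K) : commutator G ≤ f.eqLocus g := by
  rw [commutator_eq_closure, closure_le]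
  rintro _ ⟨x, y, rfl⟩
  have hf : ∀ z, f z = (f z * (g z)⁻¹) * g z := fun z => by group
  show f ⁅x, y⁆ = g ⁅x, y⁆
  rw [map_commutatorElement, map_commutatorElement, hf x, hf y,
    commutatorElement_mul_mul_of_mem_center (h x) (h y)]

theorem mul_inv_mem_of_mem_commutator {M : Subgroup K} [M.Normal] {f g : G →* K}
    (h : ∀ x, f x * (g x)⁻¹ ∈ M.upperCentralSeriesStep) {w : G} (hw : w ∈ commutator G) :
    f w * (g w)⁻¹ ∈ M := by
  let π := QuotientGroup.mk' M
  have hcenter : ∀ x, (π.comp f) x * ((π.comp g) x)⁻¹ ∈ center (K ⧸ M) := fun x => by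
    simpa [π, Subgroup.upperCentralSeriesStep_eq_comap_center] using h x
  have hw' : π (f w) = π (g w) := commutator_le_eqLocus_of_mul_inv_mem_center hcenter hw
  simpa [π, QuotientGroup.eq_iff_div_mem, div_eq_mul_inv] using hw'

theorem lowerCentralSeries_le_upperCentralSeriesStep (n : ℕ) :
    (⊤ : Subgroup K).lowerCentralSeries n ≤
      ((⊤ : Subgroup K).lowerCentralSeries (n + 1)).upperCentralSeriesStep :=
  fun _ hk y => commutator_mem_commutator hk (mem_top y)

theorem mul_inv_mem_lowerCentralSeries_succ_of_mem_commutator {n : ℕ} {f g : G →* K}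
    (h : ∀ x, f x * (g x)⁻¹ ∈ (⊤ : Subgroup K).lowerCentralSeries n) {w : G}
    (hw : w ∈ commutator G) : f w * (g w)⁻¹ ∈ (⊤ : Subgroup K).lowerCentralSeries (n + 1) :=
  mul_inv_mem_of_mem_commutator (fun x => lowerCentralSeries_le_upperCentralSeriesStep n (h x)) hw

theorem inv_mul_mem_iff_of_mul_inv_mem {N : Subgroup K} [N.Normal] {u v : K} (huv : u * v⁻¹ ∈ N)
    (ω : K) : ω⁻¹ * u ∈ N ↔ ω⁻¹ * v ∈ N := by
  have huv' : (u : K ⧸ N) = v := QuotientGroup.eq_iff_div_mem.mpr (by rwa [div_eq_mul_inv])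
  rw [← QuotientGroup.eq, ← QuotientGroup.eq, huv']

end

theorem agree_mod_next_on_commutator_general {G K : Type*} [Group G] [Group K]
    (n : ℕ) (f g : G →* K)
    (h : ∀ x : G, f x * (g x)⁻¹ ∈ (⊤ : Subgroup K).lowerCentralSeries (n - 1)) :
    (∀ w ∈ commutator G, f w * (g w)⁻¹ ∈ (⊤ : Subgroup K).lowerCentralSeries n) ∧
    (∀ (r : ℕ) (f' g' : FreeGroup (Fin r) →* FreeGroup (Fin r))
        (φ : MulAut (FreeGroup (Fin r) ⧸ (⊤ : Subgroup (FreeGroup (Fin r))).lowerCentralSeries (n - 1))),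
      (∀ x : FreeGroup (Fin r),
        (QuotientGroup.mk (f' x) :
            FreeGroup (Fin r) ⧸ (⊤ : Subgroup (FreeGroup (Fin r))).lowerCentralSeries (n - 1)) =
          φ (QuotientGroup.mk x)) →
      (∀ x : FreeGroup (Fin r),
        (QuotientGroup.mk (g' x) :
            FreeGroup (Fin r) ⧸ (⊤ : Subgroup (FreeGroup (Fin r))).lowerCentralSeries (n - 1)) =
          φ (QuotientGroup.mk x)) →
      ∀ ω ∈ commutator (FreeGroup (Fin r)),
        (ω⁻¹ * f' ω ∈ (⊤ : Subgroup (FreeGroup (Fin r))).lowerCentralSeries n ↔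
          ω⁻¹ * g' ω ∈ (⊤ : Subgroup (FreeGroup (Fin r))).lowerCentralSeries n)) := by
  have hn : n ≤ n - 1 + 1 := by omega
  refine ⟨fun w hw => Subgroup.lowerCentralSeries_antitone _ hn
    (mul_inv_mem_lowerCentralSeries_succ_of_mem_commutator h hw), ?_⟩
  intro r f' g' φ hf hg ω hω
  have hfg : ∀ x,
      f' x * (g' x)⁻¹ ∈ (⊤ : Subgroup (FreeGroup (Fin r))).lowerCentralSeries (n - 1) :=
    fun x => by rw [← div_eq_mul_inv, ← QuotientGroup.eq_iff_div_mem, hf, hg]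
  exact inv_mul_mem_iff_of_mul_inv_mem
    (Subgroup.lowerCentralSeries_antitone _ hn
      (mul_inv_mem_lowerCentralSeries_succ_of_mem_commutator hfg hω)) ω

/-- if `f, g : G → K` agree modulo `K_n`, then they agree modulo
`K_{n+1}` on the commutator subgroup `[G,G]`.  In particular, two endomorphisms
`f', g'` of a free group `F` of finite rank lifting the same automorphism `φ` of
`F/F_n` satisfy, for any `ω ∈ [F,F]`:
`f'(ω) ∈ ω·F_{n+1}` iff `g'(ω) ∈ ω·F_{n+1}`. -/
theorem agree_mod_next_on_commutator {G K : Type*} [Group G] [Group K]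
    (n : ℕ) (hn : 1 ≤ n) (f g : G →* K)
    (h : ∀ x : G, f x * (g x)⁻¹ ∈ (⊤ : Subgroup K).lowerCentralSeries (n - 1)) :
    (∀ w ∈ commutator G, f w * (g w)⁻¹ ∈ (⊤ : Subgroup K).lowerCentralSeries n) ∧
    (∀ (r : ℕ) (f' g' : FreeGroup (Fin r) →* FreeGroup (Fin r))
        (φ : MulAut (FreeGroup (Fin r) ⧸ (⊤ : Subgroup (FreeGroup (Fin r))).lowerCentralSeries (n - 1))),
      (∀ x : FreeGroup (Fin r),
        (QuotientGroup.mk (f' x) :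
            FreeGroup (Fin r) ⧸ (⊤ : Subgroup (FreeGroup (Fin r))).lowerCentralSeries (n - 1)) =
          φ (QuotientGroup.mk x)) →
      (∀ x : FreeGroup (Fin r),
        (QuotientGroup.mk (g' x) :
            FreeGroup (Fin r) ⧸ (⊤ : Subgroup (FreeGroup (Fin r))).lowerCentralSeries (n - 1)) =
          φ (QuotientGroup.mk x)) →
      ∀ ω ∈ commutator (FreeGroup (Fin r)),
        (ω⁻¹ * f' ω ∈ (⊤ : Subgroup (FreeGroup (Fin r))).lowerCentralSeries n ↔
          ω⁻¹ * g' ω ∈ (⊤ : Subgroup (FreeGroup (Fin r))).lowerCentralSeries n)) :=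
  agree_mod_next_on_commutator_general n f g h
end

section
/- Let n ≥ 2 and let h be an automorphism of F/F_{n+1} that induces the identity automorphism of F/F_n. Then: (1) for every a ∈ F/F_{n+1}, the element a⁻¹·h(a) lies in the central subgroup F_n/F_{n+1} of F/F_{n+1}; (2) the assignment a ↦ a⁻¹·h(a) is a group homomorphism F/F_{n+1} → F_n/F_{n+1} which factors through the abelianization H = F/F₂ of F, yielding a homomorphism ψ_h : H → F_n/F_{n+1}; and (3) the assignment h ↦ ψ_h is an injective group homomorphism from the group of all automorphisms of F/F_{n+1} inducing the identity on F/F_n into the abelian group Hom(H, F_n/F_{n+1}). -/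
/-!
`Fg g` is the free group `F` on `2g` generators `x₁,…,x_g,y₁,…,y_g`
(`X g i = x_i`, `Y g i = y_i`), `omegaG g = [x₁,y₁]⋯[x_g,y_g]`.
Paper convention: `F_k = (⊤ : Subgroup (Fg g)).lowerCentralSeries (k-1)`, and
`Q g k = F/F_k`.  `IsA0 g k φ` says that the automorphism `φ` of `F/F_k`
lies in `A₀(F/F_k)`: some endomorphism of `F` lifting `φ` sends `ω_g`
into `ω_g·F_{k+1}`.
-/

open scoped commutatorElement

abbrev Fg (g : ℕ) := FreeGroup (Fin g × Bool)

def X (g : ℕ) (i : Fin g) : Fg g := FreeGroup.of (i, false)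

def Y (g : ℕ) (i : Fin g) : Fg g := FreeGroup.of (i, true)

def omegaG (g : ℕ) : Fg g := ((List.finRange g).map fun i => ⁅X g i, Y g i⁆).prod

/-- `F/F_k` in the paper's indexing of the lower central series. -/
abbrev Q (g k : ℕ) := Fg g ⧸ (⊤ : Subgroup (Fg g)).lowerCentralSeries (k - 1)

def mkQ (g k : ℕ) : Fg g →* Q g k := QuotientGroup.mk' _

/-- Membership in `A₀(F/F_k)`. -/
def IsA0 (g k : ℕ) (φ : MulAut (Q g k)) : Prop :=
  ∃ h : Fg g →* Fg g,
    (∀ a : Fg g, mkQ g k (h a) = φ (mkQ g k a)) ∧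
    (omegaG g)⁻¹ * h (omegaG g) ∈ (⊤ : Subgroup (Fg g)).lowerCentralSeries k

/-- The natural projection `F/F_{k+1} → F/F_k`. -/
def projQ (g k : ℕ) : Q g (k + 1) →* Q g k :=
  QuotientGroup.map _ _ (MonoidHom.id _)
    (fun x hx => Subgroup.lowerCentralSeries_antitone _ (Nat.sub_le k 1) hx)

/-- The subgroup `F_n/F_{n+1}` of `F/F_{n+1}`. -/
def Kn (g n : ℕ) : Subgroup (Q g (n + 1)) :=
  ((⊤ : Subgroup (Fg g)).lowerCentralSeries (n - 1)).map (mkQ g (n + 1))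

/-- `h` induces the identity automorphism of `F/F_n`. -/
def InducesId (g n : ℕ) (h : MulAut (Q g (n + 1))) : Prop :=
  ∀ a : Fg g, projQ g n (h (mkQ g (n + 1) a)) = mkQ g n a


/-!
If `h` induces the identity on `F/F_n`, then `h a = a · δ(a)` with `δ(a)` in `F_n/F_{n+1}`, which
is central because `[F_n, F] = F_{n+1}`. Centrality makes `δ` a homomorphism that kills
commutators, so it factors through `H`. For the same reason `h` fixes every commutator, hence all
of `F_n/F_{n+1} ⊆ [F/F_{n+1}, F/F_{n+1}]`, and then
`δ_{h₁h₂}(a) = δ_{h₁}(a) · h₁(δ_{h₂}(a)) = δ_{h₁}(a) · δ_{h₂}(a)`.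
-/

open Subgroup
open scoped IsMulCommutative -- the `CommGroup` structure on `center G`

namespace MulAut

variable {G : Type*} [Group G] {h : MulAut G}

theorem inv_mul_apply_mul_of_mem_center (hh : ∀ a, a⁻¹ * h a ∈ center G) (a b : G) :
    (a * b)⁻¹ * h (a * b) = (a⁻¹ * h a) * (b⁻¹ * h b) := by
  have hcomm : b⁻¹ * (a⁻¹ * h a) = (a⁻¹ * h a) * b⁻¹ := mem_center_iff.mp (hh a) b⁻¹
  calc (a * b)⁻¹ * h (a * b) = b⁻¹ * (a⁻¹ * h a) * h b := by rw [map_mul]; group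
    _ = (a⁻¹ * h a) * (b⁻¹ * h b) := by rw [hcomm, mul_assoc]

variable (h) in
def centralDisplacement (hh : ∀ a, a⁻¹ * h a ∈ center G) : G →* center G where
  toFun a := ⟨a⁻¹ * h a, hh a⟩
  map_one' := by ext; simp
  map_mul' a b := Subtype.ext (inv_mul_apply_mul_of_mem_center hh a b)

theorem apply_commutatorElement_of_mem_center (hh : ∀ a, a⁻¹ * h a ∈ center G) (a b : G) :
    h ⁅a, b⁆ = ⁅a, b⁆ := by
  obtain ⟨u, hu, hau⟩ : ∃ u ∈ center G, h a = a * u := ⟨a⁻¹ * h a, hh a, by group⟩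
  obtain ⟨v, hv, hbv⟩ : ∃ v ∈ center G, h b = b * v := ⟨b⁻¹ * h b, hh b, by group⟩
  have hu' := mem_center_iff.mp hu
  have hv' := mem_center_iff.mp hv
  rw [map_commutatorElement, hau, hbv, commutatorElement_def, commutatorElement_def]
  calc a * u * (b * v) * (a * u)⁻¹ * (b * v)⁻¹
      = a * (u * (b * v)) * u⁻¹ * a⁻¹ * v⁻¹ * b⁻¹ := by group
    _ = a * b * (v * a⁻¹) * v⁻¹ * b⁻¹ := by rw [← hu' (b * v)]; group
    _ = a * b * a⁻¹ * b⁻¹ := by rw [← hv' a⁻¹]; group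

theorem apply_eq_self_of_mem_commutator (hh : ∀ a, a⁻¹ * h a ∈ center G) {x : G}
    (hx : x ∈ commutator G) : h x = x := by
  have hle : commutator G ≤ MonoidHom.eqLocus (h : G →* G) (MonoidHom.id G) := by
    rw [commutator_def, commutator_le]
    exact fun a _ b _ => apply_commutatorElement_of_mem_center hh a b
  exact hle hx

theorem inv_mul_mul_apply (h₁ h₂ : MulAut G) (a : G)
    (hfix : h₁ (a⁻¹ * h₂ a) = a⁻¹ * h₂ a) :
    a⁻¹ * (h₁ * h₂) a = (a⁻¹ * h₁ a) * (a⁻¹ * h₂ a) := by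
  calc a⁻¹ * (h₁ * h₂) a = a⁻¹ * h₁ (a * (a⁻¹ * h₂ a)) := by
        rw [mul_inv_cancel_left]; rfl
    _ = (a⁻¹ * h₁ a) * (a⁻¹ * h₂ a) := by rw [map_mul, hfix, mul_assoc]

end MulAut

theorem Subgroup.map_lowerCentralSeries_le_center {G : Type*} [Group G] (k : ℕ) :
    ((⊤ : Subgroup G).lowerCentralSeries k).map
      (QuotientGroup.mk' ((⊤ : Subgroup G).lowerCentralSeries (k + 1))) ≤ center _ := by
  rw [← commutator_top_right_eq_bot_iff_le_center,
    ← map_top_of_surjective _ (QuotientGroup.mk'_surjective _), ← map_commutator]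
  exact QuotientGroup.map_mk'_self _

theorem kn_le_center (g n : ℕ) (hn : 1 ≤ n) : Kn g n ≤ center (Q g (n + 1)) := by
  obtain ⟨k, rfl⟩ := Nat.exists_eq_add_of_le' hn
  exact map_lowerCentralSeries_le_center k

theorem kn_le_commutator (g n : ℕ) (hn : 2 ≤ n) : Kn g n ≤ commutator (Q g (n + 1)) := by
  rw [Kn, mkQ, map_lowerCentralSeries, map_top_of_surjective _ (QuotientGroup.mk'_surjective _),
    ← top_lowerCentralSeries_one]
  exact Subgroup.lowerCentralSeries_antitone _ (by omega)

theorem ker_projQ (g n : ℕ) : (projQ g n).ker = Kn g n :=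
  (QuotientGroup.ker_map _ _ _ _).trans (by rw [comap_id]; rfl)

theorem InducesId.inv_mul_apply_mem_kn {g n : ℕ} {h : MulAut (Q g (n + 1))}
    (hh : InducesId g n h) (a : Q g (n + 1)) : a⁻¹ * h a ∈ Kn g n := by
  obtain ⟨x, rfl⟩ : ∃ x, mkQ g (n + 1) x = a := QuotientGroup.mk'_surjective _ a
  rw [← ker_projQ, MonoidHom.mem_ker, map_mul, map_inv, hh x, inv_mul_eq_one]
  rfl

theorem johnson_map_of_aut_general (g n : ℕ) (hn : 2 ≤ n) :
    -- `F_n/F_{n+1}` is a central subgroup of `F/F_{n+1}`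
    Kn g n ≤ Subgroup.center (Q g (n + 1)) ∧
    -- (1) and (2)
    (∀ h : MulAut (Q g (n + 1)), InducesId g n h →
      (∀ a : Q g (n + 1), a⁻¹ * h a ∈ Kn g n) ∧
      (∀ a b : Q g (n + 1), (a * b)⁻¹ * h (a * b) = (a⁻¹ * h a) * (b⁻¹ * h b)) ∧
      (∃ ψ : Abelianization (Fg g) →* Q g (n + 1),
        ∀ a : Fg g,
          ψ (Abelianization.of a) = (mkQ g (n + 1) a)⁻¹ * h (mkQ g (n + 1) a))) ∧
    -- (3) homomorphism property: `ψ_{h₁∘h₂} = ψ_{h₁}·ψ_{h₂}` pointwise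
    (∀ h₁ h₂ : MulAut (Q g (n + 1)), InducesId g n h₁ → InducesId g n h₂ →
      ∀ a : Q g (n + 1), a⁻¹ * (h₁ * h₂) a = (a⁻¹ * h₁ a) * (a⁻¹ * h₂ a)) ∧
    -- (3) injectivity
    (∀ h₁ h₂ : MulAut (Q g (n + 1)), InducesId g n h₁ → InducesId g n h₂ →
      (∀ a : Q g (n + 1), a⁻¹ * h₁ a = a⁻¹ * h₂ a) → h₁ = h₂) := by
  have hcen : ∀ h, InducesId g n h → ∀ a, a⁻¹ * h a ∈ center (Q g (n + 1)) :=
    fun h hh a => kn_le_center g n (by omega) (hh.inv_mul_apply_mem_kn a)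
  refine ⟨kn_le_center g n (by omega), fun h hh => ⟨hh.inv_mul_apply_mem_kn,
    MulAut.inv_mul_apply_mul_of_mem_center (hcen h hh), ?_⟩, fun h₁ h₂ hh₁ hh₂ a => ?_,
    fun h₁ h₂ _ _ heq => MulEquiv.ext fun a => mul_left_cancel (heq a)⟩
  · let δ := (MulAut.centralDisplacement h (hcen h hh)).comp (mkQ g (n + 1))
    exact ⟨(center _).subtype.comp (Abelianization.lift δ), fun _ => rfl⟩
  · exact MulAut.inv_mul_mul_apply h₁ h₂ a <|
      MulAut.apply_eq_self_of_mem_commutator (hcen h₁ hh₁)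
        (kn_le_commutator g n hn (hh₂.inv_mul_apply_mem_kn a))

/-- for an automorphism `h` of `F/F_{n+1}` inducing the identity on
`F/F_n`: (1) `a⁻¹·h(a)` lies in the central subgroup `F_n/F_{n+1}`;
(2) `a ↦ a⁻¹·h(a)` is a homomorphism factoring through the abelianization
`H = F/F₂`, giving `ψ_h : H → F_n/F_{n+1}`; (3) `h ↦ ψ_h` is an injective
group homomorphism into `Hom(H, F_n/F_{n+1})`. -/
theorem johnson_map_of_aut (g n : ℕ) (hg : 1 ≤ g) (hn : 2 ≤ n) :
    -- `F_n/F_{n+1}` is a central subgroup of `F/F_{n+1}`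
    Kn g n ≤ Subgroup.center (Q g (n + 1)) ∧
    -- (1) and (2)
    (∀ h : MulAut (Q g (n + 1)), InducesId g n h →
      (∀ a : Q g (n + 1), a⁻¹ * h a ∈ Kn g n) ∧
      (∀ a b : Q g (n + 1), (a * b)⁻¹ * h (a * b) = (a⁻¹ * h a) * (b⁻¹ * h b)) ∧
      (∃ ψ : Abelianization (Fg g) →* Q g (n + 1),
        ∀ a : Fg g,
          ψ (Abelianization.of a) = (mkQ g (n + 1) a)⁻¹ * h (mkQ g (n + 1) a))) ∧
    -- (3) homomorphism property: `ψ_{h₁∘h₂} = ψ_{h₁}·ψ_{h₂}` pointwise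
    (∀ h₁ h₂ : MulAut (Q g (n + 1)), InducesId g n h₁ → InducesId g n h₂ →
      ∀ a : Q g (n + 1), a⁻¹ * (h₁ * h₂) a = (a⁻¹ * h₁ a) * (a⁻¹ * h₂ a)) ∧
    -- (3) injectivity
    (∀ h₁ h₂ : MulAut (Q g (n + 1)), InducesId g n h₁ → InducesId g n h₂ →
      (∀ a : Q g (n + 1), a⁻¹ * h₁ a = a⁻¹ * h₂ a) → h₁ = h₂) :=
  johnson_map_of_aut_general g n hn
end

section
/- Let A be an associative (not necessarily commutative) ring and δ : A → A an additive map satisfying δ(x·y) = δ(x)·y − x·δ(y) for all x, y ∈ A. Let n ≥ 2 and suppose given elements a_{ij} ∈ A for all pairs 1 ≤ i < j ≤ n+2 with (i,j) ∉ {(1,n+1), (2,n+2), (1,n+2)}, satisfying δ(a_{rs}) = Σ_{r<i<s} a_{ri}·a_{is} for each such pair (r,s) (in particular δ(a_{i,i+1}) = 0, the sum being empty). Set b_{1,n+1} = Σ_{1<i<n+1} a_{1i}·a_{i,n+1} and b_{2,n+2} = Σ_{2<i<n+2} a_{2i}·a_{i,n+2}. Then a_{12}·b_{2,n+2} − b_{1,n+1}·a_{n+1,n+2}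 = δ( Σ_{2<i<n+1} a_{1i}·a_{i,n+2} ). -/
/-!
By the Leibniz rule and the defining-system relations, `δ (∑_{2<i<n+1} a₁ᵢ aᵢ,ₙ₊₂)` is a difference
of two sums of `a₁ⱼ aⱼᵢ aᵢ,ₙ₊₂` over chains `1 < j < i < n + 2`. The chains common to both sums
cancel; what remains are the chains with `j = 2` and those with `i = n + 1`, which are the terms of
`a₁₂ b₂,ₙ₊₂ - b₁,ₙ₊₁ aₙ₊₁,ₙ₊₂` after the shared term `a₁₂ a₂,ₙ₊₁ aₙ₊₁,ₙ₊₂` cancels.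
-/

namespace Finset

theorem sum_Ioo_eq_add_sum_Ioo_add_one {M : Type*} [AddCommMonoid M] {p i : ℕ} (h : p + 1 < i)
    (f : ℕ → M) : ∑ j ∈ Ioo p i, f j = f (p + 1) + ∑ j ∈ Ioo (p + 1) i, f j := by
  rw [← Ico_add_one_left_eq_Ioo, sum_eq_sum_Ico_succ_bot h, Ico_add_one_left_eq_Ioo]

theorem sum_Ioo_add_one_eq_sum_Ioo_add {M : Type*} [AddCommMonoid M] {i q : ℕ} (h : i < q)
    (f : ℕ → M) : ∑ j ∈ Ioo i (q + 1), f j = ∑ j ∈ Ioo i q, f j + f q := by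
  rw [Ioo_add_one_right_eq_Ioc, ← Ioo_insert_right h, sum_insert right_notMem_Ioo, add_comm]

theorem sum_sum_Ioo_sub_sum_sum_Ioo {G : Type*} [AddCommGroup G] (p q : ℕ) (F : ℕ → ℕ → G) :
    ∑ i ∈ Ioo (p + 1) q, ∑ j ∈ Ioo p i, F j i - ∑ i ∈ Ioo (p + 1) q, ∑ j ∈ Ioo i (q + 1), F i j =
      ∑ i ∈ Ioo (p + 1) q, (F (p + 1) i - F i q) := by
  have h_bot : ∀ i ∈ Ioo (p + 1) q,
      ∑ j ∈ Ioo p i, F j i = F (p + 1) i + ∑ j ∈ Ioo (p + 1) i, F j i :=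
    fun i hi ↦ sum_Ioo_eq_add_sum_Ioo_add_one (mem_Ioo.1 hi).1 _
  have h_top : ∀ i ∈ Ioo (p + 1) q,
      ∑ j ∈ Ioo i (q + 1), F i j = ∑ j ∈ Ioo i q, F i j + F i q :=
    fun i hi ↦ sum_Ioo_add_one_eq_sum_Ioo_add (mem_Ioo.1 hi).2 _
  have h_swap : ∑ i ∈ Ioo (p + 1) q, ∑ j ∈ Ioo (p + 1) i, F j i =
      ∑ i ∈ Ioo (p + 1) q, ∑ j ∈ Ioo i q, F i j :=
    sum_comm' fun i j ↦ by simp only [mem_Ioo]; omega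
  rw [sum_congr rfl h_bot, sum_congr rfl h_top, sum_add_distrib, sum_add_distrib, h_swap,
    sum_sub_distrib]
  abel

end Finset

open Finset

/-- the algebraic identity behind
`α₁ ⌣ ⟨α₂,…,α_{n+1}⟩ = ⟨α₁,…,α_n⟩ ⌣ α_{n+1}`.  Here `δ` is an additive map
satisfying `δ(xy) = δ(x)y − xδ(y)`, and `a i j` (for `1 ≤ i < j ≤ n+2`,
`(i,j) ∉ {(1,n+1),(2,n+2),(1,n+2)}`) is a defining system:
`δ(a r s) = Σ_{r<i<s} (a r i)(a i s)`. -/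
theorem massey_symmetry_identity {A : Type*} [Ring A] (δ : A →+ A)
    (hδ : ∀ x y : A, δ (x * y) = δ x * y - x * δ y)
    (n : ℕ) (hn : 2 ≤ n) (a : ℕ → ℕ → A)
    (ha : ∀ r s : ℕ, 1 ≤ r → r < s → s ≤ n + 2 →
      (r, s) ≠ (1, n + 1) → (r, s) ≠ (2, n + 2) → (r, s) ≠ (1, n + 2) →
      δ (a r s) = ∑ i ∈ Finset.Ioo r s, a r i * a i s) :
    a 1 2 * (∑ i ∈ Finset.Ioo 2 (n + 2), a 2 i * a i (n + 2)) -
      (∑ i ∈ Finset.Ioo 1 (n + 1), a 1 i * a i (n + 1)) * a (n + 1) (n + 2) =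
    δ (∑ i ∈ Finset.Ioo 2 (n + 1), a 1 i * a i (n + 2)) := by
  have hδ_left : ∀ i ∈ Ioo 2 (n + 1), δ (a 1 i) = ∑ j ∈ Ioo 1 i, a 1 j * a j i := by
    intro i hi
    simp only [mem_Ioo] at hi
    exact ha 1 i (by omega) (by omega) (by omega) (by grind) (by grind) (by grind)
  have hδ_right : ∀ i ∈ Ioo 2 (n + 1),
      δ (a i (n + 2)) = ∑ j ∈ Ioo i (n + 2), a i j * a j (n + 2) := by
    intro i hi
    simp only [mem_Ioo] at hi
    exact ha i (n + 2) (by omega) (by omega) le_rfl (by grind) (by grind) (by grind)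
  calc _ = ∑ i ∈ Ioo 2 (n + 1),
          (a 1 2 * a 2 i * a i (n + 2) - a 1 i * a i (n + 1) * a (n + 1) (n + 2)) := by
        rw [sum_Ioo_add_one_eq_sum_Ioo_add (i := 2) (q := n + 1) (by omega),
          sum_Ioo_eq_add_sum_Ioo_add_one (p := 1) (i := n + 1) (by omega),
          sum_sub_distrib, mul_add, add_mul, mul_sum, sum_mul]
        simp only [mul_assoc]
        abel
    _ = ∑ i ∈ Ioo 2 (n + 1), ∑ j ∈ Ioo 1 i, a 1 j * a j i * a i (n + 2) -
          ∑ i ∈ Ioo 2 (n + 1), ∑ j ∈ Ioo i (n + 2), a 1 i * a i j * a j (n + 2) :=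
        (sum_sum_Ioo_sub_sum_sum_Ioo 1 (n + 1) fun j i ↦ a 1 j * a j i * a i (n + 2)).symm
    _ = _ := by
        rw [map_sum, ← sum_sub_distrib]
        refine sum_congr rfl fun i hi ↦ ?_
        rw [hδ, hδ_left i hi, hδ_right i hi, sum_mul, mul_sum]
        simp only [mul_assoc]
end

section
/- Let F be a free group, π any group, n ≥ 2, and let p : F → π be an n-equivalence, i.e., p induces an isomorphism F/F_n ≅ π/π_n. Then the induced homomorphism F_n/F_{n+1} → π_n/π_{n+1} is surjective. -/
/-!
Induction on `k ≤ n` shows `π_k = p(F_k) · π_{k+1}`; the case `k = n` is the claim. A generator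
`[a, b]` of `π_{k+1}` (`a ∈ π_k`, `b ∈ π`) factors as `a = p(w) c` with `c ∈ π_{k+1}` and, as `p`
is onto modulo `π_n`, `b = p(x) d` with `d ∈ π_n`. Modulo `π_{k+2}` both `c` and `d` are central
(`d` because `π_{n+1} ≤ π_{k+2}`), so `[a, b] ≡ p[w, x]`.
-/

theorem lcs_map_le {G H : Type*} [Group G] [Group H] (f : G →* H) (k : ℕ) :
    ((⊤ : Subgroup G).lowerCentralSeries k).map f ≤ (⊤ : Subgroup H).lowerCentralSeries k := by
  induction k with
  | zero => exact le_top
  | succ k ih =>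
    show Subgroup.map f ⁅(⊤ : Subgroup G).lowerCentralSeries k, ⊤⁆ ≤ ⁅(⊤ : Subgroup H).lowerCentralSeries k, ⊤⁆
    rw [Subgroup.map_commutator]
    exact Subgroup.commutator_mono ih le_top

/-- With the paper's indexing `G_k = (⊤ : Subgroup G).lowerCentralSeries (k - 1)`, `p` is an
`n`-equivalence iff `inducedQuotMap p (n - 1)` is bijective. -/
def inducedQuotMap {G H : Type*} [Group G] [Group H] (f : G →* H) (k : ℕ) :
    G ⧸ (⊤ : Subgroup G).lowerCentralSeries k →* H ⧸ (⊤ : Subgroup H).lowerCentralSeries k :=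
  QuotientGroup.map _ _ f
    (fun x hx => Subgroup.mem_comap.mpr (lcs_map_le f k (Subgroup.mem_map_of_mem f hx)))

open scoped commutatorElement

section

variable {G H : Type*} [Group G] [Group H]

theorem commutatorElement_mul_mul_of_commute {g c h d : G} (hc : Commute c (h * d))
    (hd : Commute g d) : ⁅g * c, h * d⁆ = ⁅g, h⁆ := by
  rw [commutatorElement_def, commutatorElement_def]
  calc g * c * (h * d) * (g * c)⁻¹ * (h * d)⁻¹
      = g * (c * (h * d)) * c⁻¹ * g⁻¹ * (h * d)⁻¹ := by group
    _ = g * h * (d * g⁻¹) * d⁻¹ * h⁻¹ := by rw [hc.eq]; group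
    _ = g * h * g⁻¹ * h⁻¹ := by rw [← hd.inv_left.eq]; group

theorem QuotientGroup.commute_mk_of_commutatorElement_mem {N : Subgroup G} [N.Normal] {a b : G}
    (h : ⁅a, b⁆ ∈ N) : Commute (a : G ⧸ N) (b : G ⧸ N) := by
  rw [← commutatorElement_eq_one_iff_commute, ← QuotientGroup.mk'_apply, ← QuotientGroup.mk'_apply,
    ← map_commutatorElement, QuotientGroup.mk'_apply, QuotientGroup.eq_one_iff]
  exact h

theorem commutatorElement_mem_lowerCentralSeries_succ {k : ℕ} {a : G}
    (ha : a ∈ (⊤ : Subgroup G).lowerCentralSeries k) (b : G) :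
    ⁅a, b⁆ ∈ (⊤ : Subgroup G).lowerCentralSeries (k + 1) :=
  Subgroup.commutator_mem_commutator ha (Subgroup.mem_top b)

theorem MonoidHom.range_sup_lowerCentralSeries_eq_top {f : G →* H} {k : ℕ}
    (hf : Function.Surjective (inducedQuotMap f k)) :
    f.range ⊔ (⊤ : Subgroup H).lowerCentralSeries k = ⊤ := by
  refine eq_top_iff.mpr fun b _ => ?_
  obtain ⟨y, hy⟩ := hf b
  induction y using QuotientGroup.induction_on with | H x => ?_
  have hxb : (f x)⁻¹ * b ∈ (⊤ : Subgroup H).lowerCentralSeries k := QuotientGroup.eq.mp hy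
  simpa only [mul_inv_cancel_left] using Subgroup.mul_mem_sup (f.mem_range.mpr ⟨x, rfl⟩) hxb

variable {f : G →* H} {m : ℕ}

theorem lowerCentralSeries_succ_le_map_sup (hf : f.range ⊔ (⊤ : Subgroup H).lowerCentralSeries m = ⊤)
    {k : ℕ} (hkm : k + 1 ≤ m)
    (hk : (⊤ : Subgroup H).lowerCentralSeries k ≤
      ((⊤ : Subgroup G).lowerCentralSeries k).map f ⊔ (⊤ : Subgroup H).lowerCentralSeries (k + 1)) :
    (⊤ : Subgroup H).lowerCentralSeries (k + 1) ≤
      ((⊤ : Subgroup G).lowerCentralSeries (k + 1)).map f ⊔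
        (⊤ : Subgroup H).lowerCentralSeries (k + 2) := by
  rw [Subgroup.lowerCentralSeries_succ, Subgroup.commutator_le]
  intro a ha b _
  obtain ⟨_, ⟨w, hw, rfl⟩, c, hc, rfl⟩ := Subgroup.mem_sup_of_normal_right.mp (hk ha)
  obtain ⟨_, ⟨x, rfl⟩, d, hd, rfl⟩ :=
    Subgroup.mem_sup_of_normal_right.mp (hf ▸ Subgroup.mem_top b : b ∈ _)
  set N := (⊤ : Subgroup H).lowerCentralSeries (k + 2)
  have hc_central : Commute (c : H ⧸ N) ↑(f x * d) :=
    QuotientGroup.commute_mk_of_commutatorElement_mem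
      (commutatorElement_mem_lowerCentralSeries_succ hc _)
  have hd_central : Commute (f w : H ⧸ N) ↑d :=
    (QuotientGroup.commute_mk_of_commutatorElement_mem
      (Subgroup.lowerCentralSeries_antitone _ (by omega : k + 2 ≤ m + 1)
        (commutatorElement_mem_lowerCentralSeries_succ hd _))).symm
  have hmod : ((⁅f w * c, f x * d⁆ : H) : H ⧸ N) = ((f ⁅w, x⁆ : H) : H ⧸ N) := by
    simp only [← QuotientGroup.mk'_apply, map_commutatorElement, map_mul] at hc_central ⊢
    exact commutatorElement_mul_mul_of_commute hc_central hd_central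
  exact Subgroup.mem_sup_of_normal_right.mpr
    ⟨_, Subgroup.mem_map_of_mem f (commutatorElement_mem_lowerCentralSeries_succ hw x), _,
      QuotientGroup.eq.mp hmod.symm, mul_inv_cancel_left _ _⟩

theorem lowerCentralSeries_le_map_sup (hm : 1 ≤ m)
    (hf : f.range ⊔ (⊤ : Subgroup H).lowerCentralSeries m = ⊤) {k : ℕ} (hkm : k ≤ m) :
    (⊤ : Subgroup H).lowerCentralSeries k ≤
      ((⊤ : Subgroup G).lowerCentralSeries k).map f ⊔ (⊤ : Subgroup H).lowerCentralSeries (k + 1) := by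
  induction k with
  | zero =>
    rw [Subgroup.lowerCentralSeries_zero, Subgroup.lowerCentralSeries_zero, ← f.range_eq_map]
    exact hf.symm.le.trans <| sup_le_sup_left ((⊤ : Subgroup H).lowerCentralSeries_antitone hm) _
  | succ k ih => exact lowerCentralSeries_succ_le_map_sup hf hkm (ih (by omega))

end

/-- if `p : F → π` is an `n`-equivalence from a free group, then the
induced map `F_n/F_{n+1} → π_n/π_{n+1}` is surjective. -/
theorem lcs_quotient_surjective_of_equivalence {α π : Type*} [Group π]
    (n : ℕ) (hn : 2 ≤ n) (p : FreeGroup α →* π)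
    (hp : Function.Bijective (inducedQuotMap p (n - 1))) :
    ∀ z ∈ (⊤ : Subgroup π).lowerCentralSeries (n - 1),
      ∃ w ∈ (⊤ : Subgroup (FreeGroup α)).lowerCentralSeries (n - 1),
        (p w)⁻¹ * z ∈ (⊤ : Subgroup π).lowerCentralSeries n := by
  obtain ⟨m, rfl⟩ : ∃ m, n = m + 1 := ⟨n - 1, by omega⟩
  rw [Nat.add_sub_cancel] at hp ⊢
  intro z hz
  have hsplit := lowerCentralSeries_le_map_sup (f := p) (by omega)
    (MonoidHom.range_sup_lowerCentralSeries_eq_top hp.2) le_rfl hz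
  obtain ⟨_, ⟨w, hw, rfl⟩, v, hv, rfl⟩ := Subgroup.mem_sup_of_normal_right.mp hsplit
  exact ⟨w, hw, by rwa [inv_mul_cancel_left]⟩
end

section
/- Let F be a free group of finite rank, π a group, n ≥ 2, and let p : F → π be a 2-equivalence (i.e., p induces an isomorphism F/F₂ ≅ π/π₂). Suppose there exists a group homomorphism q : π → F/F_n such that the composition q∘p : F → F/F_n is a 2-equivalence (i.e., induces an isomorphism on the quotients by the second lower central series terms). Then p is an n-equivalence, i.e., p induces an isomorphism F/F_n ≅ π/π_n. -/
/-!
A homomorphism into a nilpotent group `G` that is onto modulo commutators is onto. If `G_{m+1}`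
is trivial, induction applied to `G/G_m` shows that the image together with `G_m` is everything;
as `G_m` is central, the image then contains all commutators, hence is everything. This makes
`p` onto modulo `π_n`.

Write `Q = F/F_n` and `p̄ : Q → π/π_n` for the map induced by `p`. Since `Q_n` is trivial, `q`
factors as `q' : π/π_n → Q`, and `q' ∘ p̄` is an endomorphism of `Q` that is onto modulo
commutators, hence onto. As `F` is free, `q' ∘ p̄` has a section `s`. On abelianizations `s` is a
right inverse of a surjective endomorphism of a finitely generated abelian group, which is
injective (finitely generated ℤ-modules are Noetherian), so `s` is onto there, hence onto, and then `q' ∘ p̄` is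
injective. Hence so is `p̄`.
-/

open Subgroup Function
open scoped commutatorElement

section InducedQuotMap

variable {G H K : Type*} [Group G] [Group H] [Group K]

theorem inducedQuotMap_id (k : ℕ) : inducedQuotMap (MonoidHom.id G) k = MonoidHom.id _ :=
  QuotientGroup.map_id _

theorem inducedQuotMap_comp (g : H →* K) (f : G →* H) (k : ℕ) :
    inducedQuotMap (g.comp f) k = (inducedQuotMap g k).comp (inducedQuotMap f k) :=
  (QuotientGroup.map_comp_map _ _ _ _ _ _ _).symm

theorem inducedQuotMap_surjective {f : G →* H} (hf : Surjective f) (k : ℕ) :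
    Surjective (inducedQuotMap f k) :=
  QuotientGroup.map_surjective_of_surjective _ _ _ (QuotientGroup.mk_surjective.comp hf) _

theorem surjective_inducedQuotMap_of_comp {g : H →* K} {f : G →* H} {k : ℕ}
    (h : Surjective (inducedQuotMap (g.comp f) k)) : Surjective (inducedQuotMap g k) := by
  rw [inducedQuotMap_comp, MonoidHom.coe_comp] at h
  exact h.of_comp

theorem range_sup_lcs_eq_top_of_surjective_inducedQuotMap {f : G →* H} {k : ℕ}
    (hf : Surjective (inducedQuotMap f k)) :
    f.range ⊔ (⊤ : Subgroup H).lowerCentralSeries k = ⊤ := by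
  refine eq_top_iff.mpr fun y _ => ?_
  obtain ⟨x, hx⟩ := hf y
  induction x using QuotientGroup.induction_on
  obtain ⟨c, hc, rfl⟩ := (QuotientGroup.mk'_eq_mk' _).mp hx
  exact mul_mem_sup ⟨_, rfl⟩ hc

theorem injective_inducedQuotMap_one_of_surjective [Group.FG G] (φ : G →* G)
    (h : Surjective (inducedQuotMap φ 1)) : Injective (inducedQuotMap φ 1) := by
  have : Group.FG (Abelianization G) := Group.fg_of_surjective (QuotientGroup.mk'_surjective _)
  have : Module.Finite ℤ (Additive (Abelianization G)) :=
    Module.Finite.iff_addGroup_fg.mpr inferInstance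
  exact IsNoetherian.injective_of_surjective_endomorphism
    (Abelianization.map φ).toAdditive.toIntLinearMap h

end InducedQuotMap

section LowerCentralSeries

variable {G H : Type*} [Group G] [Group H]

theorem commutatorElement_mul_mul_of_mem_center_s14 {u v : G} (a b : G) (hu : u ∈ center G)
    (hv : v ∈ center G) : ⁅a * u, b * v⁆ = ⁅a, b⁆ := by
  rw [mem_center_iff] at hu hv
  have hab : a * u * (b * v) = a * b * (u * v) := by
    rw [mul_assoc a u, ← mul_assoc u, ← hu b]; group
  have hba : b * v * (a * u) = b * a * (u * v) := by
    rw [mul_assoc b v, ← mul_assoc v, ← hv a, ← hu v]; group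
  have key : ∀ x y : G, ⁅x, y⁆ = x * y * (y * x)⁻¹ := fun x y => by
    rw [commutatorElement_def]; group
  rw [key, key, hab, hba]
  group

theorem commutator_le_of_sup_center_eq_top {H : Subgroup G} (h : H ⊔ center G = ⊤) :
    commutator G ≤ H := by
  have hdecomp : ∀ g : G, ∃ a ∈ H, ∃ u ∈ center G, a * u = g := fun g =>
    mem_sup_of_normal_right.mp (h ▸ mem_top g)
  rw [commutator_def, commutator_le]
  intro g₁ _ g₂ _
  obtain ⟨a, ha, u, hu, rfl⟩ := hdecomp g₁
  obtain ⟨b, hb, v, hv, rfl⟩ := hdecomp g₂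
  rw [commutatorElement_mul_mul_of_mem_center_s14 a b hu hv, commutatorElement_def]
  exact mul_mem (mul_mem (mul_mem ha hb) (inv_mem ha)) (inv_mem hb)

theorem map_mk'_eq_top_iff (N : Subgroup G) [N.Normal] (X : Subgroup G) :
    X.map (QuotientGroup.mk' N) = ⊤ ↔ X ⊔ N = ⊤ := by
  rw [← (comap_injective (QuotientGroup.mk'_surjective N)).eq_iff, comap_map_eq, comap_top,
    QuotientGroup.ker_mk']

theorem lcs_map_eq_of_surjective {f : G →* H} (hf : Surjective f) (k : ℕ) :
    ((⊤ : Subgroup G).lowerCentralSeries k).map f = (⊤ : Subgroup H).lowerCentralSeries k := by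
  rw [map_lowerCentralSeries, map_top_of_surjective f hf]

theorem lcs_quotient_lcs_eq_bot (k : ℕ) :
    (⊤ : Subgroup (G ⧸ (⊤ : Subgroup G).lowerCentralSeries k)).lowerCentralSeries k =
      ⊥ := by
  rw [← lcs_map_eq_of_surjective (QuotientGroup.mk'_surjective _), Subgroup.map_eq_bot_iff,
    QuotientGroup.ker_mk']

theorem lcs_le_ker_of_lcs_eq_bot (f : G →* H) {k : ℕ}
    (hH : (⊤ : Subgroup H).lowerCentralSeries k = ⊥) :
    (⊤ : Subgroup G).lowerCentralSeries k ≤ f.ker :=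
  (Subgroup.map_eq_bot_iff _).mp (le_bot_iff.mp (hH ▸ lcs_map_le f k))

theorem lcs_le_center_of_lcs_succ_eq_bot {k : ℕ}
    (h : (⊤ : Subgroup G).lowerCentralSeries (k + 1) = ⊥) :
    (⊤ : Subgroup G).lowerCentralSeries k ≤ center G := by
  rw [← centralizer_univ, ← coe_top]
  exact commutator_eq_bot_iff_le_centralizer.mp h

theorem eq_top_of_sup_lcs_one_eq_top {m : ℕ} (hG : (⊤ : Subgroup G).lowerCentralSeries m = ⊥)
    {K : Subgroup G} (h : K ⊔ (⊤ : Subgroup G).lowerCentralSeries 1 = ⊤) : K = ⊤ := by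
  induction m generalizing G with
  | zero =>
    rw [Subgroup.lowerCentralSeries_zero] at hG
    rw [eq_top_iff, hG]
    exact bot_le
  | succ m ih =>
    have hKm : K ⊔ (⊤ : Subgroup G).lowerCentralSeries m = ⊤ := by
      rw [← map_mk'_eq_top_iff]
      refine ih (lcs_quotient_lcs_eq_bot m) ?_
      rw [← lcs_map_eq_of_surjective (QuotientGroup.mk'_surjective _), ← Subgroup.map_sup, h,
        map_top_of_surjective _ (QuotientGroup.mk'_surjective _)]
    have hKcenter : K ⊔ center G = ⊤ :=
      top_le_iff.mp (hKm ▸ sup_le_sup_left (lcs_le_center_of_lcs_succ_eq_bot hG) K)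
    rwa [top_lowerCentralSeries_one,
      sup_eq_left.mpr (commutator_le_of_sup_center_eq_top hKcenter)] at h

theorem surjective_of_surjective_inducedQuotMap_one {m : ℕ}
    (hH : (⊤ : Subgroup H).lowerCentralSeries m = ⊥) (f : G →* H)
    (hf : Surjective (inducedQuotMap f 1)) : Surjective f :=
  MonoidHom.range_eq_top.mp
    (eq_top_of_sup_lcs_one_eq_top hH (range_sup_lcs_eq_top_of_surjective_inducedQuotMap hf))

end LowerCentralSeries

namespace FreeGroup

variable {α : Type*}

theorem exists_comp_eq_id_of_surjective_onto_lcs_quotient {M : Type*} [Group M] {k : ℕ}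
    (hM : (⊤ : Subgroup M).lowerCentralSeries k = ⊥)
    (φ : M →* FreeGroup α ⧸ (⊤ : Subgroup (FreeGroup α)).lowerCentralSeries k)
    (hφ : Surjective φ) : ∃ s, φ.comp s = MonoidHom.id _ := by
  let s₀ : FreeGroup α →* M := lift fun a => surjInv hφ (of a)
  refine ⟨QuotientGroup.lift _ s₀ (lcs_le_ker_of_lcs_eq_bot s₀ hM), ?_⟩
  refine QuotientGroup.monoidHom_ext _ (ext_hom _ _ fun a => ?_)
  simp [s₀, surjInv_eq hφ]

theorem injective_of_surjective_inducedQuotMap_one [Finite α] {k : ℕ}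
    (φ : FreeGroup α ⧸ (⊤ : Subgroup (FreeGroup α)).lowerCentralSeries k →*
      FreeGroup α ⧸ (⊤ : Subgroup (FreeGroup α)).lowerCentralSeries k)
    (hφ : Surjective (inducedQuotMap φ 1)) : Injective φ := by
  have hQ := lcs_quotient_lcs_eq_bot (G := FreeGroup α) k
  obtain ⟨s, hs⟩ := exists_comp_eq_id_of_surjective_onto_lcs_quotient hQ φ
    (surjective_of_surjective_inducedQuotMap_one hQ φ hφ)
  have hs_ab : LeftInverse (inducedQuotMap φ 1) (inducedQuotMap s 1) := by
    intro x
    rw [← MonoidHom.comp_apply, ← inducedQuotMap_comp, hs, inducedQuotMap_id,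
      MonoidHom.id_apply]
  have hφ_ab_inj := injective_inducedQuotMap_one_of_surjective φ hφ
  have hs_surj : Surjective s := surjective_of_surjective_inducedQuotMap_one hQ s
    (hs_ab.rightInverse_of_injective hφ_ab_inj).surjective
  have hs_left : LeftInverse φ s := fun x => DFunLike.congr_fun hs x
  exact (hs_left.rightInverse_of_surjective hs_surj).injective

end FreeGroup

theorem n_equivalence_of_lift_general (r : ℕ) {π : Type*} [Group π] (n : ℕ)
    (p : FreeGroup (Fin r) →* π)
    (hp2 : Function.Bijective (inducedQuotMap p 1))
    (q : π →* FreeGroup (Fin r) ⧸ (⊤ : Subgroup (FreeGroup (Fin r))).lowerCentralSeries (n - 1))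
    (hqp : Function.Bijective (inducedQuotMap (q.comp p) 1)) :
    Function.Bijective (inducedQuotMap p (n - 1)) := by
  set P := inducedQuotMap p (n - 1)
  let mkF := QuotientGroup.mk' ((⊤ : Subgroup (FreeGroup (Fin r))).lowerCentralSeries (n - 1))
  let mkπ := QuotientGroup.mk' ((⊤ : Subgroup π).lowerCentralSeries (n - 1))
  let q' := QuotientGroup.lift _ q (lcs_le_ker_of_lcs_eq_bot q (lcs_quotient_lcs_eq_bot _))
  have hq'P_ab : Surjective (inducedQuotMap (q'.comp P) 1) :=
    surjective_inducedQuotMap_of_comp (g := q'.comp P) (f := mkF) hqp.2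
  have hmkπp_ab : Surjective (inducedQuotMap (mkπ.comp p) 1) := by
    rw [inducedQuotMap_comp, MonoidHom.coe_comp]
    exact (inducedQuotMap_surjective (QuotientGroup.mk'_surjective _) 1).comp hp2.2
  have hP_ab : Surjective (inducedQuotMap P 1) :=
    surjective_inducedQuotMap_of_comp (g := P) (f := mkF) hmkπp_ab
  have hq'P_inj := FreeGroup.injective_of_surjective_inducedQuotMap_one _ hq'P_ab
  exact ⟨Injective.of_comp (f := q') hq'P_inj,
    surjective_of_surjective_inducedQuotMap_one (lcs_quotient_lcs_eq_bot _) P hP_ab⟩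

/-- if `p : F → π` is a 2-equivalence from a free group of finite rank
and there is `q : π → F/F_n` with `q∘p` a 2-equivalence, then `p` is an
`n`-equivalence.  (A `k`-equivalence means `inducedQuotMap · (k-1)` is bijective;
`F/F₂` is the quotient by `lowerCentralSeries F 1` and `F/F_n` by
`lowerCentralSeries F (n-1)`.) -/
theorem n_equivalence_of_lift (r : ℕ) {π : Type*} [Group π] (n : ℕ) (hn : 2 ≤ n)
    (p : FreeGroup (Fin r) →* π)
    (hp2 : Function.Bijective (inducedQuotMap p 1))
    (q : π →* FreeGroup (Fin r) ⧸ (⊤ : Subgroup (FreeGroup (Fin r))).lowerCentralSeries (n - 1))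
    (hqp : Function.Bijective (inducedQuotMap (q.comp p) 1)) :
    Function.Bijective (inducedQuotMap p (n - 1)) :=
  n_equivalence_of_lift_general r n p hp2 q hqp
end
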